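/- Let u ∈ ℤ[X] be nonconstant. Then u is locally nilpotent at −1 if and only if u has one of the following forms: (1) u(X) = (X+1)·p(X) for some nonzero p ∈ ℤ[X]; (2) u(X) = −2X − 4 + p(X)·(X+1)(X+2) for some p ∈ ℤ[X]; (3) u(X) = 2X² + 7X + 3 + p(X)·(X+1)(X+2)(X+3) for some p ∈ ℤ[X]; (4) u(X) = X − 1. Moreover, polynomials of forms (1), (2), (3) are nilpotent at −1 of nilpotency index 1, 2, 3 respectively, while X − 1 is not nilpotent at −1. -/

import Mathlib

/-!
Write `s n = u^{(n)}(-1)`. Since `a - b ∣ u(a) - u(b)`, the orbit is periodic modulo every prime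
`q` from the first repetition on, so `q ∣ s j - s i` with `i < j` forces `q` to divide some `s m`
with `m < j`. If `s i = -(i + 1)` for `i ≤ N`, this makes `y = s (N + 1) + N + 2` divisible by
`1, …, N` and leaves `y - 1, …, y - (N + 1)` without prime factors above `N + 1`; hence `y = 0`,
or `y = N + 2` with `N ≤ 2`. So the orbit either is `-1, -2, -3, …`, which forces `u = X - 1`
as `u(x) = x - 1` at infinitely many points, or it reaches `0` at a step `N + 1 ≤ 3` after
`-1, …, -(N + 1)`, which fixes `u` modulo `(X + 1) ⋯ (X + N + 1)`.
-/

open Polynomial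

/-- The `n`-th compositional iterate of the polynomial `u`, evaluated at `r`. -/
def iterEval (u : Polynomial ℤ) (n : ℕ) (r : ℤ) : ℤ :=
  (fun x => Polynomial.eval x u)^[n] r

/-- `u` is weakly locally nilpotent at `r` outside `A`: for every prime `p ∉ A`
there is `m ≥ 1` with `p ∣ u^{(m)}(r)`. -/
def WeaklyLocallyNilpotentAt (u : Polynomial ℤ) (r : ℤ) (A : Set ℕ) : Prop :=
  ∀ p : ℕ, Nat.Prime p → p ∉ A → ∃ m : ℕ, 1 ≤ m ∧ (p : ℤ) ∣ iterEval u m r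

/-- `u` is locally nilpotent at `r`: for every prime `p` there is `m ≥ 1`
with `p ∣ u^{(m)}(r)`. -/
def LocallyNilpotentAt (u : Polynomial ℤ) (r : ℤ) : Prop :=
  ∀ p : ℕ, Nat.Prime p → ∃ m : ℕ, 1 ≤ m ∧ (p : ℤ) ∣ iterEval u m r

/-- `u` is nilpotent at `r`: some iterate `u^{(n)}(r)` (with `n ≥ 1`) equals `0`. -/
def IsNilpotentAt (u : Polynomial ℤ) (r : ℤ) : Prop :=
  ∃ n : ℕ, 1 ≤ n ∧ iterEval u n r = 0

/-- `u` is nilpotent at `r` with nilpotency index exactly `i`. -/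
def NilpotentOfIndex (u : Polynomial ℤ) (r : ℤ) (i : ℕ) : Prop :=
  1 ≤ i ∧ iterEval u i r = 0 ∧ ∀ m : ℕ, 1 ≤ m → m < i → iterEval u m r ≠ 0

theorem iterEval_succ (u : ℤ[X]) (n : ℕ) (r : ℤ) :
    iterEval u (n + 1) r = u.eval (iterEval u n r) :=
  Function.iterate_succ_apply' _ _ _

theorem iterEval_add (u : ℤ[X]) (m n : ℕ) (r : ℤ) :
    iterEval u (m + n) r = iterEval u m (iterEval u n r) :=
  Function.iterate_add_apply _ _ _ _

theorem sub_dvd_iterEval_sub (u : ℤ[X]) (t : ℕ) (a b : ℤ) :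
    a - b ∣ iterEval u t a - iterEval u t b := by
  induction t with
  | zero => exact dvd_rfl
  | succ t ih =>
    rw [iterEval_succ, iterEval_succ]
    exact ih.trans (sub_dvd_eval_sub _ _ u)

/-- Modulo `q` the orbit is periodic from step `i` on with period `j - i`, so it can only reach
`0` at a step before `j` if it reaches it at all. -/
theorem exists_lt_dvd_iterEval_of_dvd_sub {u : ℤ[X]} {r q : ℤ} {i j : ℕ} (hij : i < j)
    (hq : q ∣ iterEval u j r - iterEval u i r) (m : ℕ) (hm : q ∣ iterEval u m r) :
    ∃ m' < j, q ∣ iterEval u m' r := by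
  induction m using Nat.strong_induction_on with
  | _ m ih =>
    by_cases hmj : m < j
    · exact ⟨m, hmj, hm⟩
    obtain ⟨t, rfl⟩ : ∃ t, m = t + j := ⟨m - j, by omega⟩
    have hshift : q ∣ iterEval u (t + j) r - iterEval u (t + i) r := by
      rw [iterEval_add, iterEval_add]
      exact hq.trans (sub_dvd_iterEval_sub u t _ _)
    exact ih (t + i) (by omega) (by simpa using dvd_sub hm hshift)

theorem eq_one_or_eq_neg_one_of_forall_prime_not_dvd {z : ℤ}
    (h : ∀ q : ℕ, q.Prime → ¬ (q : ℤ) ∣ z) : z = 1 ∨ z = -1 := by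
  refine Int.natAbs_eq_natAbs_iff.mp (Nat.eq_one_iff_not_exists_prime_dvd.mpr fun q hq hqz => ?_)
  exact h q hq (Int.natCast_dvd.mpr hqz)

theorem ne_zero_of_forall_prime_dvd_le {z : ℤ} {B : ℕ}
    (h : ∀ q : ℕ, q.Prime → (q : ℤ) ∣ z → q ≤ B) : z ≠ 0 := by
  rintro rfl
  obtain ⟨q, hqB, hq⟩ := Nat.exists_infinite_primes (B + 1)
  have := h q hq (dvd_zero _)
  omega

theorem eq_add_one_of_prime_dvd_sub_one {N : ℕ} {y : ℤ}
    (hdvd : ∀ k : ℕ, 1 ≤ k → k ≤ N → (k : ℤ) ∣ y)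
    (h1 : ∀ q : ℕ, q.Prime → (q : ℤ) ∣ y - 1 → q ≤ N + 1)
    {P : ℕ} (hP : P.Prime) (hPy : (P : ℤ) ∣ y - 1) : P = N + 1 := by
  refine (h1 P hP hPy).eq_of_not_lt fun hlt => ?_
  have : (P : ℤ) ∣ 1 := by simpa using dvd_sub (hdvd P hP.one_lt.le (by omega)) hPy
  exact hP.one_lt.ne' (by exact_mod_cast Int.eq_one_of_dvd_one (by positivity) this)

/-- The only possible prime factor of `y - 1` is `N + 1`, and if it occurs, `y - (N + 1)` has no
prime factor at all. -/
theorem eq_zero_or_eq_add_two_of_dvd_of_smooth_sub {N : ℕ} {y : ℤ}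
    (hdvd : ∀ k : ℕ, 1 ≤ k → k ≤ N → (k : ℤ) ∣ y)
    (hsmooth : ∀ j : ℕ, 1 ≤ j → j ≤ N + 1 → ∀ q : ℕ, q.Prime → (q : ℤ) ∣ y - j → q ≤ N + 1) :
    y = 0 ∨ (y = N + 2 ∧ N ≤ 2) := by
  have hne : ∀ j : ℕ, 1 ≤ j → j ≤ N + 1 → y ≠ j := fun j hj hjN =>
    sub_ne_zero.mp (ne_zero_of_forall_prime_dvd_le (hsmooth j hj hjN))
  by_cases hP : ∃ P : ℕ, P.Prime ∧ (P : ℤ) ∣ y - 1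
  · obtain ⟨P, hP, hPy⟩ := hP
    obtain rfl := eq_add_one_of_prime_dvd_sub_one hdvd (by simpa using hsmooth 1) hP hPy
    have hN : 1 ≤ N := by have := hP.two_le; omega
    have hcoprime : ∀ q : ℕ, q.Prime → ¬ (q : ℤ) ∣ y - (N + 1 : ℕ) := by
      intro q hq hqy
      rcases (hsmooth (N + 1) (by omega) le_rfl q hq hqy).lt_or_eq with hlt | rfl
      · have : q ∣ N + 1 := by
          exact_mod_cast (by simpa using dvd_sub (hdvd q hq.one_lt.le (by omega)) hqy :
            (q : ℤ) ∣ (N + 1 : ℕ))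
        have := (Nat.prime_dvd_prime_iff_eq hq hP).mp this
        omega
      · have : ((N + 1 : ℕ) : ℤ) ∣ N := by
          simpa [sub_sub_sub_cancel_left] using dvd_sub hqy hPy
        have := Int.le_of_dvd (by omega) this
        omega
    rcases eq_one_or_eq_neg_one_of_forall_prime_not_dvd hcoprime with h | h
    · push_cast at h
      have hy : y = N + 2 := by linarith
      have : (N : ℤ) ∣ 2 := by simpa [hy] using dvd_sub (hdvd N hN le_rfl) (dvd_refl (N : ℤ))
      exact Or.inr ⟨hy, by exact_mod_cast Int.le_of_dvd two_pos this⟩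
    · exact absurd (by push_cast at h; linarith) (hne N hN (by omega))
  · push Not at hP
    rcases eq_one_or_eq_neg_one_of_forall_prime_not_dvd hP with h | h
    · have hN : N = 0 := by
        by_contra hN
        exact hne 2 (by omega) (by omega) (by push_cast; linarith)
      exact Or.inr ⟨by subst hN; push_cast; linarith, by omega⟩
    · exact Or.inl (by linarith)

namespace LocallyNilpotentAt

variable {u : ℤ[X]}

theorem iterEval_succ_of_forall_le (hL : LocallyNilpotentAt u (-1)) {N : ℕ}
    (hs : ∀ i ≤ N, iterEval u i (-1) = -((i : ℤ) + 1)) :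
    iterEval u (N + 1) (-1) = -((N : ℤ) + 2) ∨ (iterEval u (N + 1) (-1) = 0 ∧ N ≤ 2) := by
  set x := iterEval u (N + 1) (-1) with hx
  have key : x + N + 2 = 0 ∨ (x + N + 2 = N + 2 ∧ N ≤ 2) := by
    refine eq_zero_or_eq_add_two_of_dvd_of_smooth_sub (fun k hk hkN => ?_)
      fun j hj hjN q hq hqy => ?_
    · obtain ⟨i, rfl⟩ : ∃ i, N = i + k := ⟨N - k, by omega⟩
      have h := sub_dvd_iterEval_sub u 1 (iterEval u i (-1)) (iterEval u (i + k) (-1))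
      rw [← iterEval_add, ← iterEval_add, add_comm 1 (i + k), ← hx, hs i (by omega),
        hs (i + k) le_rfl, hs (1 + i) (by omega)] at h
      have e : x + ((i + k : ℕ) : ℤ) + 2 = k - (-(((1 + i : ℕ) : ℤ) + 1) - x) := by
        push_cast; ring
      rw [e]
      exact dvd_sub dvd_rfl (by simpa using h)
    · obtain ⟨i, hi⟩ : ∃ i, N + 1 = i + j := ⟨N + 1 - j, by omega⟩
      have hdiff : (q : ℤ) ∣ x - iterEval u i (-1) := by
        rw [hs i (by omega), show x - -((i : ℤ) + 1) = x + N + 2 - j by omega]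
        exact hqy
      obtain ⟨m, -, hm⟩ := hL q hq
      obtain ⟨m', hm'N, hm'⟩ := exists_lt_dvd_iterEval_of_dvd_sub (by omega) hdiff m hm
      rw [hs m' (by omega)] at hm'
      have := Int.le_of_dvd (by omega) (dvd_neg.mp hm')
      omega
  rcases key with h | ⟨h, hN⟩
  · exact Or.inl (by linarith)
  · exact Or.inr ⟨by linarith, hN⟩

theorem forall_iterEval_eq_or_exists_iterEval_eq_zero (hL : LocallyNilpotentAt u (-1)) :
    (∀ n : ℕ, iterEval u n (-1) = -((n : ℤ) + 1)) ∨
      ∃ N ≤ 2, (∀ i ≤ N, iterEval u i (-1) = -((i : ℤ) + 1)) ∧ iterEval u (N + 1) (-1) = 0 := by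
  by_cases hstop : ∃ N ≤ 2, (∀ i ≤ N, iterEval u i (-1) = -((i : ℤ) + 1)) ∧
      iterEval u (N + 1) (-1) = 0
  · exact Or.inr hstop
  suffices ∀ n, ∀ i ≤ n, iterEval u i (-1) = -((i : ℤ) + 1) from Or.inl fun n => this n n le_rfl
  intro n
  induction n with
  | zero =>
    intro i hi
    obtain rfl : i = 0 := by omega
    simp [iterEval]
  | succ n ih =>
    intro i hi
    rcases hi.lt_or_eq with hlt | rfl
    · exact ih i (by omega)
    rcases hL.iterEval_succ_of_forall_le ih with h | ⟨h, hn⟩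
    · rw [h]; push_cast; ring
    · exact absurd ⟨n, hn, ih, h⟩ hstop

end LocallyNilpotentAt

theorem eq_X_sub_one_of_forall_iterEval {u : ℤ[X]}
    (h : ∀ n : ℕ, iterEval u n (-1) = -((n : ℤ) + 1)) : u = X - 1 := by
  apply eq_of_infinite_eval_eq
  have hinj : Function.Injective fun n : ℕ => -((n : ℤ) + 1) := fun a b hab => by
    simpa using hab
  refine Set.infinite_of_injective_forall_mem hinj fun n => ?_
  have := h (n + 1)
  rw [iterEval_succ, h n] at this
  simp only [Set.mem_ofPred_eq, this, eval_sub, eval_X, eval_one]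
  push_cast
  ring

theorem exists_eq_add_mul_prod_X_sub_C {R : Type*} [CommRing R] [IsDomain R] {u f : R[X]}
    (s : Finset R) (h : ∀ a ∈ s, u.eval a = f.eval a) : ∃ p, u = f + p * ∏ a ∈ s, (X - C a) := by
  suffices ∏ a ∈ s, (X - C a) ∣ u - f by
    obtain ⟨p, hp⟩ := this
    exact ⟨p, by linear_combination hp⟩
  rcases eq_or_ne (u - f) 0 with h0 | h0
  · simp [h0]
  rw [Finset.prod_eq_multiset_prod, Multiset.prod_X_sub_C_dvd_iff_le_roots h0,
    Multiset.le_iff_subset s.nodup]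
  intro a ha
  simp [mem_roots h0, h a ha]

theorem LocallyNilpotentAt.exists_forms {u : ℤ[X]} (hL : LocallyNilpotentAt u (-1))
    (hu : 0 < u.natDegree) :
    (∃ p : ℤ[X], p ≠ 0 ∧ u = (X + 1) * p) ∨
      (∃ p : ℤ[X], u = -2 * X - 4 + p * (X + 1) * (X + 2)) ∨
      (∃ p : ℤ[X], u = 2 * X ^ 2 + 7 * X + 3 + p * (X + 1) * (X + 2) * (X + 3)) ∨
      u = X - 1 := by
  rcases hL.forall_iterEval_eq_or_exists_iterEval_eq_zero with hall | ⟨N, hN, hs, hzero⟩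
  · exact Or.inr (Or.inr (Or.inr (eq_X_sub_one_of_forall_iterEval hall)))
  have heval : ∀ i < N, u.eval (-((i : ℤ) + 1)) = -((i : ℤ) + 2) := fun i hi => by
    rw [← hs i hi.le, ← iterEval_succ, hs (i + 1) hi]
    push_cast
    ring
  have hroot : u.eval (-((N : ℤ) + 1)) = 0 := by rw [← hs N le_rfl, ← iterEval_succ, hzero]
  interval_cases N
  · obtain ⟨p, hp⟩ := exists_eq_add_mul_prod_X_sub_C (u := u) (f := 0) {-1} (by simpa using hroot)
    refine Or.inl ⟨p, fun hp0 => ?_, by simpa [mul_comm] using hp⟩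
    simp [hp, hp0] at hu
  · obtain ⟨p, hp⟩ := exists_eq_add_mul_prod_X_sub_C (u := u) (f := -2 * X - 4) {-1, -2} (by
      have := heval 0 (by norm_num)
      norm_num at this hroot ⊢
      norm_num [this, hroot])
    refine Or.inr (Or.inl ⟨p, by simp [hp]; ring⟩)
  · obtain ⟨p, hp⟩ := exists_eq_add_mul_prod_X_sub_C (u := u) (f := 2 * X ^ 2 + 7 * X + 3)
      {-1, -2, -3} (by
      have h0 := heval 0 (by norm_num)
      have h1 := heval 1 (by norm_num)
      norm_num at h0 h1 hroot ⊢
      norm_num [h0, h1, hroot])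
    refine Or.inr (Or.inr (Or.inl ⟨p, by simp [hp]; ring⟩))

theorem NilpotentOfIndex.locallyNilpotentAt {u : ℤ[X]} {r : ℤ} {i : ℕ}
    (h : NilpotentOfIndex u r i) : LocallyNilpotentAt u r :=
  fun _ _ => ⟨i, h.1, h.2.1 ▸ dvd_zero _⟩

theorem nilpotentOfIndex_X_add_one_mul (p : ℤ[X]) : NilpotentOfIndex ((X + 1) * p) (-1) 1 :=
  ⟨le_rfl, by simp [iterEval], fun m hm1 hm => by omega⟩

theorem nilpotentOfIndex_neg_two_mul_X_sub_four_add (p : ℤ[X]) :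
    NilpotentOfIndex (-2 * X - 4 + p * (X + 1) * (X + 2)) (-1) 2 := by
  refine ⟨by norm_num, by simp [iterEval], fun m hm1 hm => ?_⟩
  obtain rfl : m = 1 := by omega
  simp [iterEval]

theorem nilpotentOfIndex_two_mul_X_sq_add_add (p : ℤ[X]) :
    NilpotentOfIndex (2 * X ^ 2 + 7 * X + 3 + p * (X + 1) * (X + 2) * (X + 3)) (-1) 3 := by
  refine ⟨by norm_num, by norm_num [iterEval], fun m hm1 hm => ?_⟩
  interval_cases m <;> norm_num [iterEval]

theorem iterEval_X_sub_one (n : ℕ) : iterEval (X - 1) n (-1) = -((n : ℤ) + 1) := by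
  induction n with
  | zero => simp [iterEval]
  | succ n ih =>
    rw [iterEval_succ, ih]
    simp only [eval_sub, eval_X, eval_one]
    push_cast
    ring

theorem locallyNilpotentAt_X_sub_one : LocallyNilpotentAt (X - 1) (-1) := fun q hq =>
  ⟨q - 1, by have := hq.two_le; omega, by
    rw [iterEval_X_sub_one, Nat.cast_sub hq.one_le]
    simp⟩

theorem not_isNilpotentAt_X_sub_one : ¬ IsNilpotentAt (X - 1) (-1) := by
  rintro ⟨n, -, hn⟩
  rw [iterEval_X_sub_one] at hn
  omega

theorem locally_nilpotent_at_neg_one_classification (u : Polynomial ℤ) (hu : 0 < u.natDegree) :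
    (LocallyNilpotentAt u (-1) ↔
      ((∃ p : Polynomial ℤ, p ≠ 0 ∧ u = (X + 1) * p) ∨
       (∃ p : Polynomial ℤ, u = -2 * X - 4 + p * (X + 1) * (X + 2)) ∨
       (∃ p : Polynomial ℤ, u = 2 * X ^ 2 + 7 * X + 3 + p * (X + 1) * (X + 2) * (X + 3)) ∨
       u = X - 1)) ∧
    (∀ p : Polynomial ℤ, p ≠ 0 → NilpotentOfIndex ((X + 1) * p) (-1) 1) ∧
    (∀ p : Polynomial ℤ, NilpotentOfIndex (-2 * X - 4 + p * (X + 1) * (X + 2)) (-1) 2) ∧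
    (∀ p : Polynomial ℤ,
      NilpotentOfIndex (2 * X ^ 2 + 7 * X + 3 + p * (X + 1) * (X + 2) * (X + 3)) (-1) 3) ∧
    ¬ IsNilpotentAt (X - 1) (-1) := by
  refine ⟨⟨fun hL => hL.exists_forms hu, ?_⟩, fun p _ => nilpotentOfIndex_X_add_one_mul p,
    nilpotentOfIndex_neg_two_mul_X_sub_four_add, nilpotentOfIndex_two_mul_X_sq_add_add,
    not_isNilpotentAt_X_sub_one⟩
  rintro (⟨p, -, rfl⟩ | ⟨p, rfl⟩ | ⟨p, rfl⟩ | rfl)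
  · exact (nilpotentOfIndex_X_add_one_mul p).locallyNilpotentAt
  · exact (nilpotentOfIndex_neg_two_mul_X_sub_four_add p).locallyNilpotentAt
  · exact (nilpotentOfIndex_two_mul_X_sq_add_add p).locallyNilpotentAt
  · exact locallyNilpotentAt_X_sub_one
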